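/- Let d ≥ 2 be an even integer, a ∈ (0,1), and let z, z' ∈ {0,1}^d both have weight exactly d/2 with Δ_H(z,z') ≥ d/16. Set Z = √(d(1 − a + a²/2)), w = (𝟙_d − a·z)/Z and w' = (𝟙_d − a·z')/Z, where 𝟙_d = (1,…,1) ∈ ℝ^d. Then cos θ(w,w') ≤ 1 − a²/32 and consequently θ(w,w') ≥ a/4. -/
import Mathlib


open Finset
open scoped RealInnerProductSpace

/-- The weight of a binary word `x : Fin d → Bool` is the number of coordinates equal to 1. -/
def weight {d : ℕ} (x : Fin d → Bool) : ℕ := (Finset.univ.filter fun i => x i = true).card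

set_option maxHeartbeats 1000000

/-- If `z, z'` are binary words of weight `d/2` with Hamming distance at least `d/16` and
`w = (𝟙_d − a·z)/Z`, `w' = (𝟙_d − a·z')/Z` with `Z = √(d(1 − a + a²/2))`, then
`cos θ(w,w') ≤ 1 − a²/32`, hence `θ(w,w') ≥ a/4`. -/
theorem stmt_5 (d : ℕ) (hd : 2 ≤ d) (hde : Even d) (a : ℝ) (ha : 0 < a) (ha' : a < 1)
    (z z' : Fin d → Bool) (hz : weight z = d / 2) (hz' : weight z' = d / 2)
    (hdist : (d : ℝ) / 16 ≤ (hammingDist z z' : ℝ))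
    (Z : ℝ) (hZ : Z = Real.sqrt ((d : ℝ) * (1 - a + a ^ 2 / 2)))
    (w w' : EuclideanSpace ℝ (Fin d))
    (hw : ∀ i, w i = (1 - a * (if z i then (1 : ℝ) else 0)) / Z)
    (hw' : ∀ i, w' i = (1 - a * (if z' i then (1 : ℝ) else 0)) / Z) :
    Real.cos (InnerProductGeometry.angle w w') ≤ 1 - a ^ 2 / 32 ∧
    a / 4 ≤ InnerProductGeometry.angle w w' := by

  have hd0 : (0:ℝ) < d := by positivity
  set c : ℝ := 1 - a + a ^ 2 / 2 with hc
  have hc0 : 0 < c := by rw [hc]; nlinarith [sq_nonneg a]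
  have hcle : c ≤ 1 := by rw [hc]; nlinarith [sq_nonneg a]
  have hZ2 : Z ^ 2 = d * c := by
    rw [hZ, Real.sq_sqrt (by positivity)]
  have hZ0 : 0 < Z := by rw [hZ]; positivity
  set f : Bool → ℝ := fun b => if b then (1:ℝ) else 0 with hf
  have hsum : ∀ (y : Fin d → Bool), weight y = d / 2 →
      ∑ i, f (y i) = (d : ℝ) / 2 := by
    intro y hy
    have h1 : ∑ i, f (y i) = ((weight y : ℕ) : ℝ) := by
      simp [hf, weight, Finset.sum_boole]
    rw [h1, hy, Nat.cast_div hde.two_dvd (by norm_num : (2:ℝ) ≠ 0)]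
    norm_num
  have hS : ∑ i, f (z i) = (d : ℝ) / 2 := hsum z hz
  have hS' : ∑ i, f (z' i) = (d : ℝ) / 2 := hsum z' hz'
  set Δ : ℝ := (hammingDist z z' : ℝ) with hΔdef
  have hΔ : Δ = ∑ i, (if z i = z' i then (0:ℝ) else 1) := by
    have h1 : ∀ i, (if z i = z' i then (0:ℝ) else 1) = if z i ≠ z' i then 1 else 0 := by
      intro i; by_cases h : z i = z' i <;> simp [h]
    rw [Finset.sum_congr rfl fun i _ => h1 i, Finset.sum_boole, hΔdef, hammingDist]
  have hM : ∑ i, f (z i) * f (z' i) = ((d:ℝ) - Δ) / 2 := by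
    have key : ∀ i, f (z i) * f (z' i)
        = (f (z i) + f (z' i) - (if z i = z' i then (0:ℝ) else 1)) / 2 := by
      intro i
      cases h1 : z i <;> cases h2 : z' i <;> simp [hf, h1, h2]
    rw [Finset.sum_congr rfl fun i _ => key i]
    rw [← Finset.sum_div, Finset.sum_sub_distrib, Finset.sum_add_distrib, hS, hS', ← hΔ]
    ring
  have hinner : ∀ (u v : Fin d → Bool) (x y : EuclideanSpace ℝ (Fin d)),
      (∀ i, x i = (1 - a * f (u i)) / Z) → (∀ i, y i = (1 - a * f (v i)) / Z) →
      ⟪x, y⟫ = (∑ i, (1 - a * f (u i)) * (1 - a * f (v i))) / Z ^ 2 := by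
    intro u v x y hx hy
    rw [PiLp.inner_apply, Finset.sum_div]
    refine Finset.sum_congr rfl fun i _ => ?_
    rw [hx i, hy i]
    simp [RCLike.inner_apply]
    ring
  have expand : ∀ (u v : Fin d → Bool),
      ∑ i, (1 - a * f (u i)) * (1 - a * f (v i))
        = (d : ℝ) - a * (∑ i, f (u i)) - a * (∑ i, f (v i))
            + a ^ 2 * ∑ i, f (u i) * f (v i) := by
    intro u v
    rw [Finset.sum_congr rfl fun i _ => (by ring :
      (1 - a * f (u i)) * (1 - a * f (v i))
        = 1 - a * f (u i) - a * f (v i) + a ^ 2 * (f (u i) * f (v i)))]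
    rw [Finset.sum_add_distrib, Finset.sum_sub_distrib, Finset.sum_sub_distrib,
      ← Finset.mul_sum, ← Finset.mul_sum, ← Finset.mul_sum, Finset.sum_const,
      Finset.card_univ, Fintype.card_fin, nsmul_eq_mul, mul_one]
  have hff : ∀ b : Bool, f b * f b = f b := by intro b; cases b <;> simp [hf]
  have hnorm : ∀ (u : Fin d → Bool) (x : EuclideanSpace ℝ (Fin d)),
      (∀ i, x i = (1 - a * f (u i)) / Z) → weight u = d / 2 → ‖x‖ = 1 := by
    intro u x hx hu
    have h1 : ⟪x, x⟫ = (∑ i, (1 - a * f (u i)) * (1 - a * f (u i))) / Z ^ 2 :=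
      hinner u u x x hx hx
    rw [expand u u, hsum u hu] at h1
    have h2 : ∑ i, f (u i) * f (u i) = (d:ℝ)/2 := by
      rw [Finset.sum_congr rfl fun i _ => hff (u i), hsum u hu]
    rw [h2] at h1
    have h3 : ⟪x, x⟫ = 1 := by
      rw [h1, hZ2, hc, div_eq_one_iff_eq (ne_of_gt (by nlinarith [sq_nonneg a]))]
      ring
    have h4 := real_inner_self_eq_norm_sq x
    rw [h3] at h4
    nlinarith [norm_nonneg x]
  have hnw : ‖w‖ = 1 := hnorm z w hw hz
  have hnw' : ‖w'‖ = 1 := hnorm z' w' hw' hz'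
  have hip : ⟪w, w'⟫ = ((d:ℝ) * (1 - a) + a ^ 2 * (((d:ℝ) - Δ) / 2)) / (d * c) := by
    rw [hinner z z' w w' hw hw', expand z z', hS, hS', hM, hZ2]
    ring
  have hcos : Real.cos (InnerProductGeometry.angle w w')
      = ((d:ℝ) * (1 - a) + a ^ 2 * (((d:ℝ) - Δ) / 2)) / (d * c) := by
    rw [InnerProductGeometry.cos_angle, hnw, hnw', hip]
    ring
  have hdc : (d:ℝ) * c ≤ d := by
    have := mul_le_mul_of_nonneg_left hcle hd0.le
    linarith [this]
  have h2 : a ^ 2 * ((d:ℝ) * c) ≤ a ^ 2 * (d:ℝ) :=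
    mul_le_mul_of_nonneg_left hdc (sq_nonneg a)
  have h3 : a ^ 2 * (d:ℝ) ≤ 16 * (a ^ 2 * Δ) := by
    have h := mul_le_mul_of_nonneg_left hdist (sq_nonneg a)
    linarith [h]
  clear hinner expand hnorm hsum hff hw hw' hS hS' hM hΔ
  have key : a ^ 2 * ((d:ℝ) * (1 - a + a ^ 2 / 2)) ≤ 16 * (a ^ 2 * Δ) := by
    rw [← hc]; linarith [h2, h3]
  have hpos : (0:ℝ) < (d:ℝ) * (1 - a + a ^ 2 / 2) := by
    rw [← hc]; exact mul_pos hd0 hc0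
  have hbound : Real.cos (InnerProductGeometry.angle w w') ≤ 1 - a ^ 2 / 32 := by
    rw [hcos, hc, div_le_iff₀ hpos]
    nlinarith [key]
  refine ⟨hbound, ?_⟩
  set θ := InnerProductGeometry.angle w w' with hθ
  have h1 : 1 - θ ^ 2 / 2 ≤ Real.cos θ := Real.one_sub_sq_div_two_le_cos
  have hθ0 : 0 ≤ θ := InnerProductGeometry.angle_nonneg w w'
  nlinarith [h1, hbound, hθ0, ha, sq_nonneg (θ - a / 4)]
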